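/- arXiv:2502.02604 — 3 statements merged into one kernel-verified Lean document; each statement's English description precedes it below -/
import Mathlib

section
/- For every κ with 0 ≤ κ < 1, there exist differentiable functions f₁, f₂, f₃ : ℝ → ℝ, defined on all of ℝ, satisfying f₁' = −κ² f₂ f₃, f₂' = f₁ f₃, f₃' = −f₁ f₂ together with the initial conditions f₁(0) = −1, f₂(0) = 0, f₃(0) = −1 (global existence of the Jacobi elliptic functions −dn, sn, −cn of modulus κ). -/
open Real Filter

/-!
The solution is parametrised by the Jacobi amplitude `φ`: with `Δ φ = √(1 - κ² sin² φ)`, take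
`f₁ = -Δ ∘ φ`, `f₂ = sin ∘ φ`, `f₃ = -cos ∘ φ`, where `φ' = Δ (φ)` and `φ 0 = 0`. Since `κ² < 1`,
`Δ` is continuous with values in `(0, 1]`, so `F x = ∫₀ˣ dψ / Δ ψ` has derivative at least `1`;
it is therefore a bijection of `ℝ`, and its inverse is a global solution `φ` of `φ' = Δ (φ)`.
-/

theorem surjective_of_hasDerivAt_ge {f f' : ℝ → ℝ} {c : ℝ} (hc : 0 < c)
    (hf : ∀ x, HasDerivAt f (f' x) x) (hf' : ∀ x, c ≤ f' x) : Function.Surjective f := by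
  have hmono : Monotone fun x => f x - c * x :=
    monotone_of_hasDerivAt_nonneg (fun x => ((hf x).sub ((hasDerivAt_id x).const_mul c)))
      (fun x => by simpa using hf' x)
  have hlin : Tendsto (fun x => c * x + f 0) atTop atTop :=
    tendsto_atTop_add_const_right _ _ (tendsto_id.const_mul_atTop hc)
  have hlin' : Tendsto (fun x => c * x + f 0) atBot atBot :=
    tendsto_atBot_add_const_right _ _ (tendsto_id.const_mul_atBot hc)
  refine continuous_iff_continuousAt.mpr (fun x => (hf x).continuousAt) |>.surjective
    (tendsto_atTop_mono' _ ?_ hlin) (tendsto_atBot_mono' _ ?_ hlin')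
  · filter_upwards [eventually_ge_atTop 0] with x hx
    linarith [hmono hx]
  · filter_upwards [eventually_le_atBot 0] with x hx
    linarith [hmono hx]

theorem exists_hasDerivAt_comp_of_pos_of_le {v : ℝ → ℝ} {M : ℝ} (hv : Continuous v)
    (hpos : ∀ x, 0 < v x) (hM : ∀ x, v x ≤ M) :
    ∃ φ : ℝ → ℝ, φ 0 = 0 ∧ ∀ t, HasDerivAt φ (v (φ t)) t := by
  have hinv : Continuous fun x => (v x)⁻¹ := hv.inv₀ fun x => (hpos x).ne'
  set F : ℝ → ℝ := fun x => ∫ y in (0 : ℝ)..x, (v y)⁻¹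
  have hF : ∀ x, HasDerivAt F (v x)⁻¹ x := fun x =>
    intervalIntegral.integral_hasDerivAt_right (hinv.intervalIntegrable _ _)
      (hinv.stronglyMeasurableAtFilter _ _) hinv.continuousAt
  have hMinv : ∀ x, M⁻¹ ≤ (v x)⁻¹ := fun x => inv_anti₀ (hpos x) (hM x)
  have hFmono : StrictMono F := strictMono_of_hasDerivAt_pos hF fun x => inv_pos.mpr (hpos x)
  have hFsurj : Function.Surjective F :=
    surjective_of_hasDerivAt_ge (inv_pos.mpr ((hpos 0).trans_le (hM 0))) hF hMinv
  set e := hFmono.orderIsoOfSurjective F hFsurj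
  have hF0 : F 0 = 0 := intervalIntegral.integral_same
  refine ⟨e.symm, hFmono.injective ((e.apply_symm_apply 0).trans hF0.symm), fun t => ?_⟩
  simpa using (hF (e.symm t)).of_local_left_inverse e.symm.continuous.continuousAt
      (inv_ne_zero (hpos _).ne') (Eventually.of_forall e.apply_symm_apply)

section JacobiDelta

variable {κ : ℝ}

theorem one_sub_sq_mul_sin_sq_pos (hκ : κ ^ 2 < 1) (ψ : ℝ) : 0 < 1 - κ ^ 2 * sin ψ ^ 2 := by
  nlinarith [sin_sq_le_one ψ, sq_nonneg κ]

theorem sqrt_one_sub_sq_mul_sin_sq_le_one (ψ : ℝ) : √(1 - κ ^ 2 * sin ψ ^ 2) ≤ 1 :=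
  sqrt_le_one.mpr (by nlinarith [sq_nonneg (κ * sin ψ)])

theorem HasDerivAt.sqrt_one_sub_sq_mul_sin_sq {φ : ℝ → ℝ} {t : ℝ} (hκ : κ ^ 2 < 1)
    (hφ : HasDerivAt φ (√(1 - κ ^ 2 * Real.sin (φ t) ^ 2)) t) :
    HasDerivAt (fun s => √(1 - κ ^ 2 * Real.sin (φ s) ^ 2))
      (-κ ^ 2 * Real.sin (φ t) * Real.cos (φ t)) t := by
  have hsqrt := (((hφ.sin.fun_pow 2).const_mul (κ ^ 2)).const_sub 1).sqrt
    (one_sub_sq_mul_sin_sq_pos hκ (φ t)).ne'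
  convert hsqrt using 1
  field_simp [(sqrt_pos.mpr (one_sub_sq_mul_sin_sq_pos hκ (φ t))).ne']
  push_cast
  ring

end JacobiDelta

/-- Global existence of the Jacobi elliptic functions −dn, sn, −cn of modulus
κ, 0 ≤ κ < 1: there exist functions f₁, f₂, f₃ : ℝ → ℝ defined on all of ℝ
satisfying f₁' = −κ²f₂f₃, f₂' = f₁f₃, f₃' = −f₁f₂ with f₁(0) = −1, f₂(0) = 0,
f₃(0) = −1. -/
theorem stmt_12 (κ : ℝ) (hκ : 0 ≤ κ) (hκ' : κ < 1) :
    ∃ f₁ f₂ f₃ : ℝ → ℝ,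
      (∀ t : ℝ, HasDerivAt f₁ (-κ ^ 2 * f₂ t * f₃ t) t) ∧
      (∀ t : ℝ, HasDerivAt f₂ (f₁ t * f₃ t) t) ∧
      (∀ t : ℝ, HasDerivAt f₃ (-(f₁ t * f₂ t)) t) ∧
      f₁ 0 = -1 ∧ f₂ 0 = 0 ∧ f₃ 0 = -1 := by
  have hκ2 : κ ^ 2 < 1 := by nlinarith
  obtain ⟨φ, hφ0, hφ⟩ :=
    exists_hasDerivAt_comp_of_pos_of_le (v := fun ψ => √(1 - κ ^ 2 * sin ψ ^ 2)) (by fun_prop)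
      (fun ψ => sqrt_pos.mpr (one_sub_sq_mul_sin_sq_pos hκ2 ψ)) sqrt_one_sub_sq_mul_sin_sq_le_one
  refine ⟨fun t => -√(1 - κ ^ 2 * sin (φ t) ^ 2), fun t => sin (φ t), fun t => -cos (φ t),
    fun t => ?_, fun t => ?_, fun t => ?_, by simp [hφ0], by simp [hφ0], by simp [hφ0]⟩
  · exact ((hφ t).sqrt_one_sub_sq_mul_sin_sq hκ2).neg.congr_deriv (by ring)
  · exact (hφ t).sin.congr_deriv (by ring)
  · exact (hφ t).cos.neg.congr_deriv (by ring)
end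

section
/- Under the stated differential system with initial conditions, the Wronskian-type closure relations of the vector-field realization Vᵢ = fᵢ·d/du hold for all t ∈ ℝ: f₂(t)f₃'(t) − f₃(t)f₂'(t) = −f₁(t), f₃(t)f₁'(t) − f₁(t)f₃'(t) = (1 − κ²)·f₂(t), and f₁(t)f₂'(t) − f₂(t)f₁'(t) = f₃(t); i.e., the vector fields f₁ d/du, f₂ d/du, f₃ d/du close into a deformed so(2,1) Lie algebra. -/
/-!
The Jacobi system has the two first integrals `f₂² + f₃²` and `f₁² + κ² f₂²`, both equal to `1`
by the initial conditions. After substituting the system, each commutator `fⱼ fₖ' − fₖ fⱼ'` is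
the remaining `fᵢ` times a combination of these first integrals
(`f₁² − κ² f₃² = (f₁² + κ² f₂²) − κ² (f₂² + f₃²) = 1 − κ²`).
-/

lemma eq_of_hasDerivAt_zero {g : ℝ → ℝ} (hg : ∀ t, HasDerivAt g 0 t) (t s : ℝ) : g t = g s :=
  is_const_of_deriv_eq_zero (fun t => (hg t).differentiableAt) (fun t => (hg t).deriv) t s

lemma sq_add_sq_eq_of_hasDerivAt {f₁ f₂ f₃ : ℝ → ℝ}
    (h₂ : ∀ t, HasDerivAt f₂ (f₁ t * f₃ t) t) (h₃ : ∀ t, HasDerivAt f₃ (-(f₁ t * f₂ t)) t)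
    (t s : ℝ) : f₂ t ^ 2 + f₃ t ^ 2 = f₂ s ^ 2 + f₃ s ^ 2 := by
  refine eq_of_hasDerivAt_zero (g := fun t => f₂ t ^ 2 + f₃ t ^ 2) (fun t => ?_) t s
  exact (((h₂ t).fun_pow 2).fun_add ((h₃ t).fun_pow 2)).congr_deriv (by ring)

lemma sq_add_mul_sq_eq_of_hasDerivAt {κ : ℝ} {f₁ f₂ f₃ : ℝ → ℝ}
    (h₁ : ∀ t, HasDerivAt f₁ (-κ ^ 2 * f₂ t * f₃ t) t) (h₂ : ∀ t, HasDerivAt f₂ (f₁ t * f₃ t) t)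
    (t s : ℝ) : f₁ t ^ 2 + κ ^ 2 * f₂ t ^ 2 = f₁ s ^ 2 + κ ^ 2 * f₂ s ^ 2 := by
  refine eq_of_hasDerivAt_zero (g := fun t => f₁ t ^ 2 + κ ^ 2 * f₂ t ^ 2) (fun t => ?_) t s
  exact (((h₁ t).fun_pow 2).fun_add (((h₂ t).fun_pow 2).const_mul (κ ^ 2))).congr_deriv (by ring)

/-- Under the Jacobi system f₁' = −κ²f₂f₃, f₂' = f₁f₃, f₃' = −f₁f₂ with
f₁(0) = −1, f₂(0) = 0, f₃(0) = −1, the vector fields Vᵢ = fᵢ·d/du close into a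
deformed so(2,1) Lie algebra: f₂f₃' − f₃f₂' = −f₁, f₃f₁' − f₁f₃' = (1 − κ²)f₂,
and f₁f₂' − f₂f₁' = f₃. -/
theorem stmt_14 (κ : ℝ) (f₁ f₂ f₃ : ℝ → ℝ)
    (h₁ : ∀ t, HasDerivAt f₁ (-κ ^ 2 * f₂ t * f₃ t) t)
    (h₂ : ∀ t, HasDerivAt f₂ (f₁ t * f₃ t) t)
    (h₃ : ∀ t, HasDerivAt f₃ (-(f₁ t * f₂ t)) t)
    (i₁ : f₁ 0 = -1) (i₂ : f₂ 0 = 0) (i₃ : f₃ 0 = -1) :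
    ∀ t : ℝ,
      f₂ t * deriv f₃ t - f₃ t * deriv f₂ t = -f₁ t ∧
      f₃ t * deriv f₁ t - f₁ t * deriv f₃ t = (1 - κ ^ 2) * f₂ t ∧
      f₁ t * deriv f₂ t - f₂ t * deriv f₁ t = f₃ t := by
  intro t
  have hcirc : f₂ t ^ 2 + f₃ t ^ 2 = 1 := by
    simpa [i₂, i₃] using sq_add_sq_eq_of_hasDerivAt h₂ h₃ t 0
  have hdelta : f₁ t ^ 2 + κ ^ 2 * f₂ t ^ 2 = 1 := by
    simpa [i₁, i₂] using sq_add_mul_sq_eq_of_hasDerivAt h₁ h₂ t 0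
  rw [(h₁ t).deriv, (h₂ t).deriv, (h₃ t).deriv]
  refine ⟨?_, ?_, ?_⟩
  · linear_combination (-f₁ t) * hcirc
  · linear_combination f₂ t * hdelta - κ ^ 2 * f₂ t * hcirc
  · linear_combination f₃ t * hdelta
end

section
/- Under the stated differential system with initial conditions, the Casimir operator of the differential realization satisfies, for every twice differentiable g : ℝ → ℝ and all t ∈ ℝ: f₁(t)·(f₁·g')'(t) − f₂(t)·(f₂·g')'(t) − (1 − κ²)·f₃(t)·(f₃·g')'(t) = κ²·[(f₃(t)² − f₂(t)²)·g''(t) − 2·f₁(t)f₂(t)f₃(t)·g'(t)] (equivalently, with f₁ = −dn, f₂ = sn, f₃ = −cn, the Casimir equals κ²[(cn² − sn²)d²/du² − 2 sn·cn·dn·d/du]). -/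
/-!
Along the Jacobi system the quadratic form f₁² + (κ² − 1)f₂² − f₃² is a first integral, and the
initial conditions make it vanish: f₁² + κ²f₂² = f₂² + f₃² (that is, dn² + κ²sn² = sn² + cn²).
Expanding (fᵢg')' by the product rule, the coefficient of g'' in the Casimir is
f₁² − f₂² − (1 − κ²)f₃², which this identity turns into κ²(f₃² − f₂²); the terms in g' add up
to −2κ²f₁f₂f₃g'.
-/

section JacobiSystem

variable {κ : ℝ} {f₁ f₂ f₃ : ℝ → ℝ}

theorem jacobi_firstIntegral_eq
    (h₁ : ∀ t, HasDerivAt f₁ (-κ ^ 2 * f₂ t * f₃ t) t)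
    (h₂ : ∀ t, HasDerivAt f₂ (f₁ t * f₃ t) t)
    (h₃ : ∀ t, HasDerivAt f₃ (-(f₁ t * f₂ t)) t) (t s : ℝ) :
    f₁ t ^ 2 + (κ ^ 2 - 1) * f₂ t ^ 2 - f₃ t ^ 2 =
      f₁ s ^ 2 + (κ ^ 2 - 1) * f₂ s ^ 2 - f₃ s ^ 2 := by
  have hF : ∀ t, HasDerivAt (fun s => f₁ s ^ 2 + (κ ^ 2 - 1) * f₂ s ^ 2 - f₃ s ^ 2) 0 t := by
    intro t
    refine ((((h₁ t).fun_pow 2).fun_add (((h₂ t).fun_pow 2).const_mul _)).fun_sub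
      ((h₃ t).fun_pow 2)).congr_deriv ?_
    ring
  exact is_const_of_deriv_eq_zero (fun x => (hF x).differentiableAt) (fun x => (hF x).deriv) t s

theorem jacobi_sq_add_sq_eq
    (h₁ : ∀ t, HasDerivAt f₁ (-κ ^ 2 * f₂ t * f₃ t) t)
    (h₂ : ∀ t, HasDerivAt f₂ (f₁ t * f₃ t) t)
    (h₃ : ∀ t, HasDerivAt f₃ (-(f₁ t * f₂ t)) t)
    (h₁₃ : f₁ 0 ^ 2 = f₃ 0 ^ 2) (h₂₀ : f₂ 0 = 0) (t : ℝ) :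
    f₁ t ^ 2 + κ ^ 2 * f₂ t ^ 2 = f₂ t ^ 2 + f₃ t ^ 2 := by
  have hconst := jacobi_firstIntegral_eq h₁ h₂ h₃ t 0
  rw [h₁₃, h₂₀] at hconst
  linear_combination hconst

theorem casimir_apply_eq {t : ℝ} {g' : ℝ → ℝ} {g'' : ℝ}
    (h₁ : HasDerivAt f₁ (-κ ^ 2 * f₂ t * f₃ t) t)
    (h₂ : HasDerivAt f₂ (f₁ t * f₃ t) t)
    (h₃ : HasDerivAt f₃ (-(f₁ t * f₂ t)) t)
    (hg' : HasDerivAt g' g'' t)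
    (hsq : f₁ t ^ 2 + κ ^ 2 * f₂ t ^ 2 = f₂ t ^ 2 + f₃ t ^ 2) :
    f₁ t * deriv (fun s => f₁ s * g' s) t
        - f₂ t * deriv (fun s => f₂ s * g' s) t
        - (1 - κ ^ 2) * (f₃ t * deriv (fun s => f₃ s * g' s) t) =
      κ ^ 2 * ((f₃ t ^ 2 - f₂ t ^ 2) * g'' - 2 * (f₁ t * f₂ t * f₃ t) * g' t) := by
  rw [(h₁.fun_mul hg').deriv, (h₂.fun_mul hg').deriv, (h₃.fun_mul hg').deriv]
  linear_combination g'' * hsq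

end JacobiSystem

theorem stmt_15_general (κ : ℝ) (f₁ f₂ f₃ : ℝ → ℝ)
    (h₁ : ∀ t, HasDerivAt f₁ (-κ ^ 2 * f₂ t * f₃ t) t)
    (h₂ : ∀ t, HasDerivAt f₂ (f₁ t * f₃ t) t)
    (h₃ : ∀ t, HasDerivAt f₃ (-(f₁ t * f₂ t)) t)
    (i₁ : f₁ 0 = -1) (i₂ : f₂ 0 = 0) (i₃ : f₃ 0 = -1)
    (g' g'' : ℝ → ℝ)
    (hg' : ∀ t, HasDerivAt g' (g'' t) t) :
    ∀ t : ℝ,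
      f₁ t * deriv (fun s => f₁ s * g' s) t
        - f₂ t * deriv (fun s => f₂ s * g' s) t
        - (1 - κ ^ 2) * (f₃ t * deriv (fun s => f₃ s * g' s) t) =
      κ ^ 2 * ((f₃ t ^ 2 - f₂ t ^ 2) * g'' t - 2 * (f₁ t * f₂ t * f₃ t) * g' t) := by
  intro t
  have hsq := jacobi_sq_add_sq_eq h₁ h₂ h₃ (by rw [i₁, i₃]) i₂ t
  exact casimir_apply_eq (h₁ t) (h₂ t) (h₃ t) (hg' t) hsq

/-- Under the Jacobi system f₁' = −κ²f₂f₃, f₂' = f₁f₃, f₃' = −f₁f₂ with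
f₁(0) = −1, f₂(0) = 0, f₃(0) = −1, the Casimir operator
C = T₁² − T₂² − (1 − κ²)T₃² of the differential realization Tᵢ = fᵢ·d/du
satisfies, for every twice differentiable g (with first derivative g' and
second derivative g''):
f₁·(f₁g')' − f₂·(f₂g')' − (1 − κ²)f₃·(f₃g')'
  = κ²[(f₃² − f₂²)g'' − 2f₁f₂f₃g']. -/
theorem stmt_15 (κ : ℝ) (f₁ f₂ f₃ : ℝ → ℝ)
    (h₁ : ∀ t, HasDerivAt f₁ (-κ ^ 2 * f₂ t * f₃ t) t)
    (h₂ : ∀ t, HasDerivAt f₂ (f₁ t * f₃ t) t)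
    (h₃ : ∀ t, HasDerivAt f₃ (-(f₁ t * f₂ t)) t)
    (i₁ : f₁ 0 = -1) (i₂ : f₂ 0 = 0) (i₃ : f₃ 0 = -1)
    (g g' g'' : ℝ → ℝ)
    (hg : ∀ t, HasDerivAt g (g' t) t)
    (hg' : ∀ t, HasDerivAt g' (g'' t) t) :
    ∀ t : ℝ,
      f₁ t * deriv (fun s => f₁ s * g' s) t
        - f₂ t * deriv (fun s => f₂ s * g' s) t
        - (1 - κ ^ 2) * (f₃ t * deriv (fun s => f₃ s * g' s) t) =
      κ ^ 2 * ((f₃ t ^ 2 - f₂ t ^ 2) * g'' t - 2 * (f₁ t * f₂ t * f₃ t) * g' t) :=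
  stmt_15_general κ f₁ f₂ f₃ h₁ h₂ h₃ i₁ i₂ i₃ g' g'' hg'
end
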